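/- Sign-coherence of g-vectors (Conjecture 1.2(iii), proved under the sign-coherence hypothesis): assume the global sign-coherence hypothesis. Then for every n×n skew-symmetrizable integer matrix B and every finite sequence w of indices in {1,…,n}, the rows of G^B(w) are sign-coherent: for each i, the entries of row i of G^B(w) are either all nonnegative or all nonpositive. -/

import Mathlib

/-!
Let `D` be a positive diagonal skew-symmetrizer of `B` and `Ĉ = C^{-B_w}(w⁻¹)` the C-matrix
of the initial seed seen from the seed reached along `w`. Sign-coherence makes every mutation
step linear: `C` and `G` get multiplied on the right by Nakanishi–Zelevinsky's matrices
`E_{k,ε}` and `F_{k,-ε}`, `ε` the sign of the `k`-th c-vector, and `E_{k,ε}ᵀ D = D F_{k,-ε}`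
yields the first duality `Cᵀ D G = D`. The second duality `Ĉ C = I` is proved by induction on
the length of `w`, together with the formula `C^B(l :: v) = E_{l,σ} C^{μ_l B}(v)` for mutating
the initial seed. Its inductive step compares column signs; the one delicate case, a c-vector
equal to `±e_l`, forces equal symmetrizers `d_k = d_l` and is settled by an exchange identity
between `E`-matrices. Then `D G = Ĉᵀ D`: row `i` of `G` is column `i` of the sign-coherent `Ĉ`
rescaled by positive numbers.
-/

open Matrix

/-- Entrywise positive part `[B]₊`. -/
def matPos {n : ℕ} (B : Matrix (Fin n) (Fin n) ℤ) : Matrix (Fin n) (Fin n) ℤ :=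
  fun i j => max (B i j) 0

/-- `B^{k•}` : the matrix `B` with all entries outside row `k` set to zero. -/
def rowR {n : ℕ} (B : Matrix (Fin n) (Fin n) ℤ) (k : Fin n) : Matrix (Fin n) (Fin n) ℤ :=
  fun i j => if i = k then B i j else 0

/-- `B^{•k}` : the matrix `B` with all entries outside column `k` set to zero. -/
def colR {n : ℕ} (B : Matrix (Fin n) (Fin n) ℤ) (k : Fin n) : Matrix (Fin n) (Fin n) ℤ :=
  fun i j => if j = k then B i j else 0

/-- `J_k` : the identity matrix with its `(k,k)` entry replaced by `-1`. -/
def Jmat (n : ℕ) (k : Fin n) : Matrix (Fin n) (Fin n) ℤ :=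
  Matrix.diagonal (fun i => if i = k then -1 else 1)

/-- Matrix mutation `μ_k(B)`. -/
def mutB {n : ℕ} (B : Matrix (Fin n) (Fin n) ℤ) (k : Fin n) : Matrix (Fin n) (Fin n) ℤ :=
  fun i j =>
    if i = k ∨ j = k then -B i j
    else B i j + max (B i k) 0 * max (B k j) 0 - max (-B i k) 0 * max (-B k j) 0

/-- Mutation of the `C`-matrix in direction `l`, where `B` is the current exchange matrix. -/
def mutC {n : ℕ} (B C : Matrix (Fin n) (Fin n) ℤ) (l : Fin n) : Matrix (Fin n) (Fin n) ℤ :=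
  fun i j =>
    if j = l then -C i j
    else C i j + max (C i l) 0 * max (B l j) 0 - max (-C i l) 0 * max (-B l j) 0

/-- One step of the simultaneous `(B, C, G)` recursion with initial exchange matrix `B0`. -/
def BCGstep {n : ℕ} (B0 : Matrix (Fin n) (Fin n) ℤ)
    (p : Matrix (Fin n) (Fin n) ℤ × Matrix (Fin n) (Fin n) ℤ × Matrix (Fin n) (Fin n) ℤ)
    (l : Fin n) :
    Matrix (Fin n) (Fin n) ℤ × Matrix (Fin n) (Fin n) ℤ × Matrix (Fin n) (Fin n) ℤ :=
  (mutB p.1 l, mutC p.1 p.2.1 l,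
    p.2.2 * (Jmat n l + colR (matPos p.1) l) - B0 * colR (matPos p.2.1) l)

/-- The triple `(B_m, C_m, G_m)` obtained from `(B0, I, I)` by mutating along the word `w`. -/
def BCG {n : ℕ} (B0 : Matrix (Fin n) (Fin n) ℤ) (w : List (Fin n)) :
    Matrix (Fin n) (Fin n) ℤ × Matrix (Fin n) (Fin n) ℤ × Matrix (Fin n) (Fin n) ℤ :=
  w.foldl (BCGstep B0) (B0, 1, 1)

/-- `B^B(w)` : the exchange matrix at the end of the word `w`. -/
def Bmat {n : ℕ} (B0 : Matrix (Fin n) (Fin n) ℤ) (w : List (Fin n)) : Matrix (Fin n) (Fin n) ℤ :=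
  (BCG B0 w).1

/-- `C^B(w)` : the matrix of c-vectors at the end of the word `w`. -/
def Cmat {n : ℕ} (B0 : Matrix (Fin n) (Fin n) ℤ) (w : List (Fin n)) : Matrix (Fin n) (Fin n) ℤ :=
  (BCG B0 w).2.1

/-- `G^B(w)` : the matrix of g-vectors at the end of the word `w`. -/
def Gmat {n : ℕ} (B0 : Matrix (Fin n) (Fin n) ℤ) (w : List (Fin n)) : Matrix (Fin n) (Fin n) ℤ :=
  (BCG B0 w).2.2

/-- `B` is skew-symmetrized by the diagonal matrix with (positive) diagonal entries `d`,
i.e. `Bᵀ = -D B D⁻¹`, stated integrally as `Bᵀ D = -(D B)`. -/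
def SkewSymmBy {n : ℕ} (B : Matrix (Fin n) (Fin n) ℤ) (d : Fin n → ℤ) : Prop :=
  (∀ i, 0 < d i) ∧ Bᵀ * Matrix.diagonal d = -(Matrix.diagonal d * B)

/-- `B` is skew-symmetrizable. -/
def SkewSymmetrizable {n : ℕ} (B : Matrix (Fin n) (Fin n) ℤ) : Prop :=
  ∃ d : Fin n → ℤ, SkewSymmBy B d

/-- Every column of `C` has all entries nonnegative or all entries nonpositive. -/
def SignCoherent {n : ℕ} (C : Matrix (Fin n) (Fin n) ℤ) : Prop :=
  ∀ j, (∀ i, 0 ≤ C i j) ∨ (∀ i, C i j ≤ 0)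

/-- The global sign-coherence hypothesis in rank `n`: all C-matrices of all cluster patterns
of rank `n` are sign-coherent. -/
def GlobalSC (n : ℕ) : Prop :=
  ∀ B' : Matrix (Fin n) (Fin n) ℤ, SkewSymmetrizable B' →
    ∀ w' : List (Fin n), SignCoherent (Cmat B' w')

/-- The sign `ε_j(C)` of the `j`-th column of a sign-coherent matrix `C`:
`-1` if column `j` contains a negative entry, `1` otherwise. -/
def epsCol {n : ℕ} (C : Matrix (Fin n) (Fin n) ℤ) (j : Fin n) : ℤ :=
  if ∃ i, C i j < 0 then -1 else 1

variable {n : ℕ}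

lemma max_zero_eq_max_neg_zero_add (x : ℤ) : max x 0 = max (-x) 0 + x := by
  linarith [max_zero_sub_max_neg_zero_eq_self x]

lemma max_zero_mul_of_pos {c : ℤ} (x : ℤ) (hc : 0 < c) : max x 0 * c = max (x * c) 0 := by
  rw [max_mul_of_nonneg _ _ hc.le, zero_mul]

lemma mul_max_zero_of_pos {c : ℤ} (x : ℤ) (hc : 0 < c) : c * max x 0 = max (c * x) 0 := by
  rw [mul_comm, max_zero_mul_of_pos x hc, mul_comm]

/-- The tropical product rule behind `F_{-ε} μ_k(B) = B E_ε`. -/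
lemma tropical_exchange (a b ε : ℤ) (hε : ε = 1 ∨ ε = -1) :
    max a 0 * max b 0 - max (-a) 0 * max (-b) 0 + max (-ε * a) 0 * (-b) = a * max (ε * b) 0 := by
  rcases hε with rfl | rfl <;> simp only [max_def] <;> split_ifs <;> nlinarith

section MatrixOps

variable (M N X : Matrix (Fin n) (Fin n) ℤ) (k l : Fin n)

lemma matPos_apply (i j : Fin n) : matPos M i j = max (M i j) 0 := rfl

lemma matPos_smul_apply (ε : ℤ) (i j : Fin n) : matPos (ε • M) i j = max (ε * M i j) 0 := rfl

lemma rowR_mul : rowR M l * X = rowR (M * X) l := by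
  ext i j
  by_cases h : i = l <;> simp [rowR, Matrix.mul_apply, h]

lemma mul_colR : X * colR M l = colR (X * M) l := by
  ext i j
  by_cases h : j = l <;> simp [colR, Matrix.mul_apply, h]

lemma mul_rowR_apply (i j : Fin n) : (X * rowR M k) i j = X i k * M k j := by
  simp [Matrix.mul_apply, rowR]

lemma colR_mul_apply (i j : Fin n) : (colR M k * X) i j = M i k * X k j := by
  simp [Matrix.mul_apply, colR]

lemma Jmat_mul_apply (i j : Fin n) : (Jmat n l * X) i j = (if i = l then -1 else 1) * X i j := by
  simp [Jmat, Matrix.diagonal_mul]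

lemma mul_Jmat_apply (i j : Fin n) : (X * Jmat n l) i j = X i j * (if j = l then -1 else 1) := by
  simp [Jmat, Matrix.mul_diagonal]

lemma Jmat_mul_self : Jmat n l * Jmat n l = 1 := by
  rw [Jmat, Matrix.diagonal_mul_diagonal, ← Matrix.diagonal_one]
  congr 1
  funext i
  split_ifs <;> norm_num

lemma Jmat_mul_rowR : Jmat n l * rowR M l = -rowR M l := by
  ext i j
  by_cases h : i = l <;> simp [Jmat_mul_apply, rowR, h]

lemma colR_mul_Jmat : colR M l * Jmat n l = -colR M l := by
  ext i j
  by_cases h : j = l <;> simp [mul_Jmat_apply, colR, h]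

variable {M l}

lemma rowR_mul_Jmat (hM : M l l = 0) : rowR M l * Jmat n l = rowR M l := by
  ext i j
  by_cases hi : i = l <;> by_cases hj : j = l <;> simp [rowR, mul_Jmat_apply, hi, hj, hM]

lemma Jmat_mul_colR (hM : M l l = 0) : Jmat n l * colR M l = colR M l := by
  ext i j
  by_cases hi : i = l <;> by_cases hj : j = l <;> simp [Jmat_mul_apply, colR, hi, hj, hM]

lemma rowR_mul_rowR (hM : M l l = 0) : rowR M l * rowR N l = 0 := by
  ext i j
  by_cases hi : i = l <;> simp [rowR, mul_rowR_apply, hi, hM]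

lemma colR_mul_colR (hM : M l l = 0) : colR M l * colR M l = 0 := by
  ext i j
  by_cases hj : j = l <;> simp [colR_mul_apply, colR, hj, hM]

end MatrixOps

section Mutation

variable (B : Matrix (Fin n) (Fin n) ℤ) (k : Fin n)

lemma mutB_apply_left (j : Fin n) : mutB B k k j = -B k j := by simp [mutB]

lemma mutB_mul_apply_left (X : Matrix (Fin n) (Fin n) ℤ) (j : Fin n) :
    (mutB B k * X) k j = -(B * X) k j := by
  simp [Matrix.mul_apply, mutB_apply_left]

lemma mutB_mutB : mutB (mutB B k) k = B := by
  ext i j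
  by_cases hik : i = k ∨ j = k <;> simp [mutB, hik]

lemma mutB_neg : mutB (-B) k = -mutB B k := by
  ext i j
  by_cases hik : i = k ∨ j = k
  · simp [mutB, hik]
  · simp only [mutB, hik, if_false, Matrix.neg_apply, neg_neg]
    ring

end Mutation

namespace SkewSymmBy

variable {B : Matrix (Fin n) (Fin n) ℤ} {d : Fin n → ℤ}

lemma apply_eq (h : SkewSymmBy B d) (i j : Fin n) : d i * B i j = -(d j * B j i) := by
  have := congrFun (congrFun h.2 j) i
  simp only [Matrix.mul_diagonal, Matrix.neg_apply, Matrix.diagonal_mul,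
    Matrix.transpose_apply] at this
  linarith

lemma of_apply_eq (hd : ∀ i, 0 < d i) (h : ∀ i j, d i * B i j = -(d j * B j i)) :
    SkewSymmBy B d := by
  refine ⟨hd, ?_⟩
  ext a b
  rw [Matrix.mul_diagonal, Matrix.neg_apply, Matrix.diagonal_mul, Matrix.transpose_apply]
  linarith [h a b]

lemma apply_self (h : SkewSymmBy B d) (i : Fin n) : B i i = 0 := by
  have hii : d i * B i i = 0 := by linarith [h.apply_eq i i]
  exact (mul_eq_zero.mp hii).resolve_left (h.1 i).ne'

lemma neg (h : SkewSymmBy B d) : SkewSymmBy (-B) d :=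
  of_apply_eq h.1 fun i j => by simp only [Matrix.neg_apply]; linarith [h.apply_eq i j]

lemma mul_max_zero (h : SkewSymmBy B d) (i j : Fin n) :
    d i * max (B i j) 0 = d j * max (-B j i) 0 := by
  rw [mul_max_zero_of_pos _ (h.1 i), mul_max_zero_of_pos _ (h.1 j), h.apply_eq, mul_neg]

lemma mutB (h : SkewSymmBy B d) (k : Fin n) : SkewSymmBy (mutB B k) d := by
  refine of_apply_eq h.1 fun i j => ?_
  by_cases hik : i = k ∨ j = k
  · have hjk : j = k ∨ i = k := hik.symm
    simp only [_root_.mutB, hik, hjk, if_true]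
    linarith [h.apply_eq i j]
  · have hjk : ¬(j = k ∨ i = k) := fun h' => hik h'.symm
    simp only [_root_.mutB, hik, hjk, if_false]
    have pos_ik := h.mul_max_zero i k
    have pos_kj := h.mul_max_zero k j
    have neg_ik := h.neg.mul_max_zero i k
    have neg_kj := h.neg.mul_max_zero k j
    simp only [Matrix.neg_apply, neg_neg] at neg_ik neg_kj
    -- scaled by `d k`, each tropical term of `μ_k(B)_{ij}` matches the opposite one of
    -- `μ_k(B)_{ji}`
    apply mul_left_cancel₀ (h.1 k).ne'
    linear_combination (d k * max (B k j) 0) * pos_ik + (d k * max (-B k i) 0) * pos_kj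
      - (d k * max (-B k j) 0) * neg_ik - (d k * max (B k i) 0) * neg_kj + d k * h.apply_eq i j

end SkewSymmBy

section Words

variable (B : Matrix (Fin n) (Fin n) ℤ) (w : List (Fin n)) (k : Fin n)

lemma BCG_append : BCG B (w ++ [k]) = BCGstep B (BCG B w) k := by
  rw [BCG, BCG, List.foldl_append, List.foldl_cons, List.foldl_nil]

lemma Bmat_append : Bmat B (w ++ [k]) = mutB (Bmat B w) k := by
  rw [Bmat, BCG_append]; rfl

lemma Cmat_append : Cmat B (w ++ [k]) = mutC (Bmat B w) (Cmat B w) k := by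
  rw [Cmat, BCG_append]; rfl

lemma Gmat_append : Gmat B (w ++ [k]) =
    Gmat B w * (Jmat n k + colR (matPos (Bmat B w)) k) - B * colR (matPos (Cmat B w)) k := by
  rw [Gmat, BCG_append]; rfl

lemma Bmat_eq_foldl : Bmat B w = w.foldl mutB B := by
  suffices ∀ p, (w.foldl (BCGstep B) p).1 = w.foldl mutB p.1 from this (B, 1, 1)
  induction w with
  | nil => intro p; rfl
  | cons a t ih => intro p; exact ih _

lemma Bmat_cons : Bmat B (k :: w) = Bmat (mutB B k) w := by
  rw [Bmat_eq_foldl, Bmat_eq_foldl, List.foldl_cons]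

lemma Bmat_neg : Bmat (-B) w = -Bmat B w := by
  induction w generalizing B with
  | nil => rfl
  | cons a t ih => rw [Bmat_cons, Bmat_cons, mutB_neg, ih]

lemma Bmat_Bmat_reverse : Bmat (Bmat B w) w.reverse = B := by
  induction w generalizing B with
  | nil => rfl
  | cons l t ih => rw [Bmat_cons, List.reverse_cons, Bmat_append, ih, mutB_mutB]

end Words

lemma SkewSymmBy.Bmat {B : Matrix (Fin n) (Fin n) ℤ} {d : Fin n → ℤ} (h : SkewSymmBy B d)
    (w : List (Fin n)) : SkewSymmBy (Bmat B w) d := by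
  induction w generalizing B with
  | nil => exact h
  | cons a t ih => rw [Bmat_cons]; exact ih (h.mutB a)

/-- Nakanishi–Zelevinsky's `E_{l,ε}^B = J_l + [εB]_+^{l•}`: under sign-coherence, mutating a
C-matrix in direction `l` is right multiplication by it, with `ε` the sign of the `l`-th column. -/
def Emat (B : Matrix (Fin n) (Fin n) ℤ) (l : Fin n) (ε : ℤ) : Matrix (Fin n) (Fin n) ℤ :=
  Jmat n l + rowR (matPos (ε • B)) l

/-- Nakanishi–Zelevinsky's `F_{l,ε}^B = J_l + [εB]_+^{•l}`, which plays the same role for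
G-matrices, with the opposite sign. -/
def Fmat (B : Matrix (Fin n) (Fin n) ℤ) (l : Fin n) (ε : ℤ) : Matrix (Fin n) (Fin n) ℤ :=
  Jmat n l + colR (matPos (ε • B)) l

section EF

variable (B X : Matrix (Fin n) (Fin n) ℤ) (l : Fin n) (ε : ℤ)

lemma mul_Emat_apply (i j : Fin n) :
    (X * Emat B l ε) i j = X i j * (if j = l then -1 else 1) + X i l * max (ε * B l j) 0 := by
  rw [Emat, mul_add, Matrix.add_apply, mul_Jmat_apply, mul_rowR_apply, matPos_smul_apply]

lemma Emat_mul_apply (i j : Fin n) :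
    (Emat B l ε * X) i j =
      (if i = l then -1 else 1) * X i j + (if i = l then (matPos (ε • B) * X) l j else 0) := by
  rw [Emat, add_mul, Matrix.add_apply, Jmat_mul_apply, rowR_mul]
  by_cases h : i = l <;> simp only [rowR, h, if_true, if_false]

lemma Fmat_mul_apply (i j : Fin n) :
    (Fmat B l ε * X) i j = (if i = l then -1 else 1) * X i j + max (ε * B i l) 0 * X l j := by
  rw [Fmat, add_mul, Matrix.add_apply, Jmat_mul_apply, colR_mul_apply, matPos_smul_apply]

lemma Emat_eq_Emat_neg_add : Emat B l ε = Emat B l (-ε) + rowR (ε • B) l := by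
  rw [Emat, Emat, add_assoc]
  congr 1
  ext i j
  by_cases h : i = l
  · simp only [rowR, h, if_true, Matrix.add_apply, matPos_smul_apply, Matrix.smul_apply,
      smul_eq_mul, neg_mul]
    exact max_zero_eq_max_neg_zero_add _
  · simp [rowR, h]

variable {B X l}

lemma Emat_congr_row {B' : Matrix (Fin n) (Fin n) ℤ} (h : ∀ j, B l j = B' l j) :
    Emat B l ε = Emat B' l ε := by
  ext i j
  by_cases hi : i = l
  · simp only [Emat, Matrix.add_apply, rowR, hi, if_true, matPos_smul_apply, h]
  · simp [Emat, rowR, hi]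

lemma Emat_mul_apply_of_ne {i : Fin n} (hi : i ≠ l) (j : Fin n) :
    (Emat B l ε * X) i j = X i j := by
  simp [Emat_mul_apply, hi]

variable (hB : B l l = 0)
include hB

lemma matPos_smul_apply_self : matPos (ε • B) l l = 0 := by
  rw [matPos_smul_apply, hB, mul_zero, max_self]

lemma Emat_mul_self : Emat B l ε * Emat B l ε = 1 := by
  rw [Emat, add_mul, mul_add, mul_add, Jmat_mul_self, Jmat_mul_rowR,
    rowR_mul_Jmat (matPos_smul_apply_self ε hB), rowR_mul_rowR _ (matPos_smul_apply_self ε hB)]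
  abel

lemma Fmat_mul_self : Fmat B l ε * Fmat B l ε = 1 := by
  rw [Fmat, add_mul, mul_add, mul_add, Jmat_mul_self, Jmat_mul_colR (matPos_smul_apply_self ε hB),
    colR_mul_Jmat, colR_mul_colR (matPos_smul_apply_self ε hB)]
  abel

lemma Emat_mul_apply_of_col {j : Fin n} (hX : ∀ t, t ≠ l → X t j = 0) (i : Fin n) :
    (Emat B l ε * X) i j = -X i j := by
  rw [Emat_mul_apply]
  by_cases hi : i = l
  · subst hi
    rw [Matrix.mul_apply, Finset.sum_eq_single i (fun t _ ht => by rw [hX t ht, mul_zero])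
      (by simp), matPos_smul_apply_self ε hB]
    simp
  · simp [hi, hX i hi]

omit hB in
lemma rowR_mul_Emat {M : Matrix (Fin n) (Fin n) ℤ} (hM : M l l = 0) :
    rowR M l * Emat B l ε = rowR M l := by
  rw [Emat, mul_add, rowR_mul_Jmat hM, rowR_mul_rowR _ hM, add_zero]

lemma Fmat_mul_mutB (hε : ε = 1 ∨ ε = -1) : Fmat B l (-ε) * mutB B l = B * Emat B l ε := by
  ext i j
  rw [Fmat_mul_apply, mul_Emat_apply]
  by_cases hi : i = l
  · subst hi
    by_cases hj : j = i <;> simp [mutB, hj, hB]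
  · by_cases hj : j = l
    · subst hj
      simp [mutB, hi, hB]
    · have := tropical_exchange (B i l) (B l j) ε hε
      simp only [mutB, hi, hj, or_self, if_false, one_mul, mul_one, if_true, true_or]
      linarith

end EF

lemma SkewSymmBy.transpose_Emat_mul_diagonal {B : Matrix (Fin n) (Fin n) ℤ} {d : Fin n → ℤ}
    (h : SkewSymmBy B d) (l : Fin n) (ε : ℤ) :
    (Emat B l ε)ᵀ * diagonal d = diagonal d * Fmat B l (-ε) := by
  ext i j
  simp only [Matrix.mul_diagonal, Matrix.diagonal_mul, Matrix.transpose_apply, Emat, Fmat,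
    Matrix.add_apply, rowR, colR, matPos_smul_apply, Jmat, Matrix.diagonal_apply]
  by_cases hj : j = l
  · subst hj
    by_cases hij : i = j
    · subst hij; simp [h.apply_self]
    · simp only [hij, Ne.symm hij, if_true, if_false, zero_add]
      rw [max_zero_mul_of_pos _ (h.1 j), mul_max_zero_of_pos _ (h.1 i)]
      congr 1
      linear_combination ε * h.apply_eq j i
  · by_cases hij : i = j
    · subst hij; simp [hj]
    · simp [hij, Ne.symm hij, hj]

section Signs

variable {C C' : Matrix (Fin n) (Fin n) ℤ}

lemma epsCol_eq_one_or_neg_one (C : Matrix (Fin n) (Fin n) ℤ) (j : Fin n) :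
    epsCol C j = 1 ∨ epsCol C j = -1 := by
  unfold epsCol; split_ifs <;> simp

lemma SignCoherent.epsCol_mul_nonneg (hC : SignCoherent C) (i j : Fin n) :
    0 ≤ epsCol C j * C i j := by
  unfold epsCol
  split_ifs with hneg
  · obtain ⟨t, ht⟩ := hneg
    rcases hC j with hpos | hnonpos
    · exact absurd (hpos t) ht.not_ge
    · linarith [hnonpos i]
  · push Not at hneg
    linarith [hneg i]

lemma epsCol_eq_of_col {j k : Fin n} {c : ℤ} (hc : c = 1 ∨ c = -1)
    (hcol : ∀ t, C t j = if t = k then c else 0) : epsCol C j = c := by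
  have hk : C k j = c := by rw [hcol, if_pos rfl]
  rcases hc with rfl | rfl
  · rw [epsCol, if_neg]
    rintro ⟨t, ht⟩
    rw [hcol t] at ht
    split_ifs at ht <;> omega
  · rw [epsCol, if_pos ⟨k, by omega⟩]

lemma epsCol_one (l : Fin n) : epsCol (1 : Matrix (Fin n) (Fin n) ℤ) l = 1 :=
  epsCol_eq_of_col (Or.inl rfl) fun _ => Matrix.one_apply

lemma SignCoherent.epsCol_eq_of_apply_eq (hC : SignCoherent C) (hC' : SignCoherent C')
    {j j' t : Fin n} (h : C t j = C' t j') (hne : C t j ≠ 0) : epsCol C j = epsCol C' j' := by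
  have h1 := hC.epsCol_mul_nonneg t j
  have h2 := hC'.epsCol_mul_nonneg t j'
  rw [← h] at h2
  rcases epsCol_eq_one_or_neg_one C j with e1 | e1 <;>
    rcases epsCol_eq_one_or_neg_one C' j' with e2 | e2 <;>
    rw [e1] at h1 ⊢ <;> rw [e2] at h2 ⊢ <;> omega

end Signs

section CoherentSteps

variable {B C G B₀ : Matrix (Fin n) (Fin n) ℤ} {l : Fin n}

lemma mutC_eq_mul_Emat (hB : B l l = 0) (hC : SignCoherent C) :
    mutC B C l = C * Emat B l (epsCol C l) := by
  ext i j
  rw [mul_Emat_apply]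
  by_cases hj : j = l
  · subst hj
    simp [mutC, hB]
  · have hs := hC.epsCol_mul_nonneg i l
    simp only [mutC, hj, if_false, mul_one]
    rcases epsCol_eq_one_or_neg_one C l with e | e <;> rw [e] at hs ⊢
    · rw [max_eq_left (by linarith : 0 ≤ C i l), max_eq_right (by linarith : -C i l ≤ 0),
        one_mul]
      ring
    · rw [max_eq_right (by linarith : C i l ≤ 0), max_eq_left (by linarith : 0 ≤ -C i l),
        neg_one_mul]
      ring

lemma Gstep_eq_mul_Fmat (hC : SignCoherent C) (hGB : G * B = B₀ * C) :
    G * (Jmat n l + colR (matPos B) l) - B₀ * colR (matPos C) l =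
      G * Fmat B l (-epsCol C l) := by
  have hs : ∀ i, 0 ≤ epsCol C l * C i l := (hC.epsCol_mul_nonneg · l)
  rcases epsCol_eq_one_or_neg_one C l with e | e <;> simp only [e] at hs ⊢
  · have hCpos : colR (matPos C) l = colR C l := by
      ext i j
      by_cases hj : j = l <;>
        simp [colR, matPos_apply, hj, max_eq_left (by linarith [hs i] : 0 ≤ C i l)]
    rw [hCpos, mul_colR, ← hGB, ← mul_colR, ← mul_sub, Fmat, add_sub_assoc]
    congr 2
    ext i j
    by_cases hj : j = l
    · subst hj
      simp only [colR, if_true, Matrix.sub_apply, matPos_apply]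
      rw [Matrix.smul_apply, smul_eq_mul, neg_one_mul]
      linarith [max_zero_eq_max_neg_zero_add (B i j)]
    · simp [colR, hj]
  · have hCneg : colR (matPos C) l = 0 := by
      ext i j
      by_cases hj : j = l <;>
        simp [colR, matPos_apply, hj, max_eq_right (by linarith [hs i] : C i l ≤ 0)]
    rw [hCneg, mul_zero, sub_zero, neg_neg, Fmat, one_smul]

end CoherentSteps

section FirstDuality

variable {B : Matrix (Fin n) (Fin n) ℤ} {d : Fin n → ℤ} (hd : SkewSymmBy B d)
  (hC : ∀ w, SignCoherent (Cmat B w))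
include hd hC

lemma Cmat_append_eq_mul_Emat (w : List (Fin n)) (k : Fin n) :
    Cmat B (w ++ [k]) = Cmat B w * Emat (Bmat B w) k (epsCol (Cmat B w) k) := by
  rw [Cmat_append, mutC_eq_mul_Emat ((hd.Bmat w).apply_self k) (hC w)]

lemma Gmat_mul_Bmat (w : List (Fin n)) : Gmat B w * Bmat B w = B * Cmat B w := by
  induction w using List.reverseRecOn with
  | nil => simp [Gmat, Bmat, Cmat, BCG]
  | append_singleton w k ih =>
    have hkk := (hd.Bmat w).apply_self k
    rw [Gmat_append, Gstep_eq_mul_Fmat (hC w) ih, Bmat_append, mul_assoc,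
      Fmat_mul_mutB _ hkk (epsCol_eq_one_or_neg_one _ _), ← mul_assoc, ih, mul_assoc,
      Cmat_append_eq_mul_Emat hd hC]

lemma Gmat_append_eq_mul_Fmat (w : List (Fin n)) (k : Fin n) :
    Gmat B (w ++ [k]) = Gmat B w * Fmat (Bmat B w) k (-epsCol (Cmat B w) k) := by
  rw [Gmat_append, Gstep_eq_mul_Fmat (hC w) (Gmat_mul_Bmat hd hC w)]

lemma transpose_Cmat_mul_diagonal_mul_Gmat (w : List (Fin n)) :
    (Cmat B w)ᵀ * diagonal d * Gmat B w = diagonal d := by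
  induction w using List.reverseRecOn with
  | nil => simp [Gmat, Cmat, BCG]
  | append_singleton w k ih =>
    have hkk := (hd.Bmat w).apply_self k
    calc (Cmat B (w ++ [k]))ᵀ * diagonal d * Gmat B (w ++ [k])
        = (Emat (Bmat B w) k (epsCol (Cmat B w) k))ᵀ
            * ((Cmat B w)ᵀ * diagonal d * Gmat B w)
            * Fmat (Bmat B w) k (-epsCol (Cmat B w) k) := by
          rw [Cmat_append_eq_mul_Emat hd hC, Gmat_append_eq_mul_Fmat hd hC, Matrix.transpose_mul]
          simp only [mul_assoc]
      _ = diagonal d * (Fmat (Bmat B w) k (-epsCol (Cmat B w) k)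
            * Fmat (Bmat B w) k (-epsCol (Cmat B w) k)) := by
          rw [ih, (hd.Bmat w).transpose_Emat_mul_diagonal, mul_assoc]
      _ = diagonal d := by rw [Fmat_mul_self _ hkk, mul_one]

lemma diagonal_mul_Bmat (w : List (Fin n)) :
    diagonal d * Bmat B w = (Cmat B w)ᵀ * diagonal d * B * Cmat B w := by
  calc diagonal d * Bmat B w
      = (Cmat B w)ᵀ * diagonal d * Gmat B w * Bmat B w := by
        rw [transpose_Cmat_mul_diagonal_mul_Gmat hd hC]
    _ = (Cmat B w)ᵀ * diagonal d * B * Cmat B w := by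
        rw [mul_assoc _ (Gmat B w), Gmat_mul_Bmat hd hC, ← mul_assoc]

end FirstDuality

section LinearAlgebra

variable {X Y G : Matrix (Fin n) (Fin n) ℤ} {k l : Fin n}

lemma col_eq_single_of_mul_eq_one (h : X * Y = 1) (hY : ∀ t, t ≠ l → Y t k = 0) :
    (Y l k = 1 ∨ Y l k = -1) ∧ ∀ i, X i l = if i = k then Y l k else 0 := by
  have hXY : ∀ i, X i l * Y l k = if i = k then 1 else 0 := fun i => by
    rw [← Matrix.one_apply, ← h, Matrix.mul_apply,
      Finset.sum_eq_single l (fun t _ ht => by rw [hY t ht, mul_zero]) (by simp)]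
  have hunit : Y l k = 1 ∨ Y l k = -1 :=
    Int.eq_one_or_neg_one_of_mul_eq_one (by rw [mul_comm, hXY k, if_pos rfl])
  refine ⟨hunit, fun i => ?_⟩
  have hi := hXY i
  split_ifs at hi ⊢ <;> rcases hunit with hu | hu <;> rw [hu] at hi <;> linarith

lemma dvd_of_transpose_mul_diagonal_mul {d : Fin n → ℤ}
    (h : Xᵀ * diagonal d * G = diagonal d) (hX : ∀ t, t ≠ l → X t k = 0) :
    d l ∣ d k := by
  have hkk := congrFun (congrFun h k) k
  rw [Matrix.mul_apply, Finset.sum_eq_single l (fun t _ ht => by simp [hX t ht]) (by simp),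
    Matrix.mul_diagonal, Matrix.transpose_apply, Matrix.diagonal_apply_eq] at hkk
  exact ⟨X l k * G l k, by rw [← hkk]; ring⟩

lemma rows_signCoherent_of_diagonal_mul_eq {d : Fin n → ℤ} (hd : ∀ i, 0 < d i)
    (h : diagonal d * G = Xᵀ * diagonal d) (hX : SignCoherent X) (i : Fin n) :
    (∀ j, 0 ≤ G i j) ∨ (∀ j, G i j ≤ 0) := by
  have hent : ∀ j, d i * G i j = X j i * d j := fun j => by
    simpa [Matrix.diagonal_mul, Matrix.mul_diagonal] using congrFun (congrFun h i) j
  rcases hX i with hpos | hneg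
  · exact Or.inl fun j => nonneg_of_mul_nonneg_right
      (by rw [hent]; exact mul_nonneg (hpos j) (hd j).le) (hd i)
  · exact Or.inr fun j => nonpos_of_mul_nonpos_right
      (by rw [hent]; exact mul_nonpos_of_nonpos_of_nonneg (hneg j) (hd j).le) (hd i)

end LinearAlgebra

/-- The identity behind the change of both signs when a c-vector of the mutated seed is `±e_l`. -/
lemma Emat_mul_mul_Emat_sign_swap {B B' C : Matrix (Fin n) (Fin n) ℤ} {l k : Fin n} {c : ℤ}
    (hc : c * c = 1) (hB : B l l = 0) (hB' : B' k k = 0)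
    (hcol : ∀ t, C t k = if t = l then c else 0) (hrow : ∀ j, c * (B * C) l j = -B' k j) :
    Emat B l c * C * Emat B' k (-c) = Emat B l (-c) * C * Emat B' k c := by
  set R := C * rowR (c • B') k with hR
  have hRcol : ∀ j t, t ≠ l → R t j = 0 := fun j t ht => by
    rw [hR, mul_rowR_apply, hcol, if_neg ht, zero_mul]
  have hBC : rowR (c • B) l * C = -R := by
    ext i j
    rw [rowR_mul, Matrix.neg_apply, hR, mul_rowR_apply, hcol, Matrix.smul_mul]
    by_cases hi : i = l
    · simp only [rowR, hi, if_true, Matrix.smul_apply, smul_eq_mul, hrow, ← mul_assoc, hc,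
        one_mul]
    · simp [rowR, hi]
  have hER : Emat B l (-c) * R = -R := by
    ext i j
    rw [Matrix.neg_apply, Emat_mul_apply_of_col _ hB (hRcol j)]
  have hRE : R * Emat B' k (-c) = R := by
    rw [hR, mul_assoc, rowR_mul_Emat _ (by rw [Matrix.smul_apply, hB', smul_zero])]
  calc Emat B l c * C * Emat B' k (-c)
      = Emat B l (-c) * C * Emat B' k (-c) + rowR (c • B) l * C * Emat B' k (-c) := by
        rw [Emat_eq_Emat_neg_add B l c, add_mul, add_mul]
    _ = Emat B l (-c) * C * Emat B' k (-c) + Emat B l (-c) * C * rowR (c • B') k := by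
        rw [hBC, neg_mul, hRE, ← hER, hR, mul_assoc (Emat B l (-c)) C (rowR _ k)]
    _ = Emat B l (-c) * C * Emat B' k c := by
        rw [← mul_add, Emat_eq_Emat_neg_add B' k c]

section InitialSeedSigns

variable {B B' C Cd : Matrix (Fin n) (Fin n) ℤ} {l k : Fin n}

lemma epsCol_Emat_mul_of_apply_ne (hdual : Cd * C = 1) (hC : SignCoherent C)
    (hCd : SignCoherent Cd) {σ ε : ℤ} (hP : SignCoherent (Emat B l σ * C))
    (hQ : SignCoherent (Emat B' k ε * Cd)) {t : Fin n} (htl : t ≠ l) (htk : C t k ≠ 0) :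
    epsCol (Emat B l σ * C) k = epsCol C k ∧ epsCol (Emat B' k ε * Cd) l = epsCol Cd l := by
  obtain ⟨s, hsk, hsl⟩ : ∃ s, s ≠ k ∧ Cd s l ≠ 0 := by
    by_contra! hs
    have := (col_eq_single_of_mul_eq_one (mul_eq_one_comm.mp hdual) hs).2 t
    rw [if_neg htl] at this
    exact htk this
  exact ⟨hP.epsCol_eq_of_apply_eq hC (Emat_mul_apply_of_ne _ htl k)
      (by rwa [Emat_mul_apply_of_ne _ htl]),
    hQ.epsCol_eq_of_apply_eq hCd (Emat_mul_apply_of_ne _ hsk l)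
      (by rwa [Emat_mul_apply_of_ne _ hsk])⟩

lemma Emat_mul_mul_Emat_of_col_single (hB : B l l = 0) (hB' : B' k k = 0) (hdual : Cd * C = 1)
    (hsingle : ∀ t, t ≠ l → C t k = 0) (hrow : ∀ j, C l k * (B * C) l j = -B' k j) :
    Emat B l (epsCol Cd l) * C * Emat B' k (epsCol (Emat B l (epsCol Cd l) * C) k) =
      Emat B l (epsCol (Emat B' k (epsCol C k) * Cd) l) * (C * Emat B' k (epsCol C k)) := by
  obtain ⟨hc, hcol'⟩ := col_eq_single_of_mul_eq_one hdual hsingle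
  have hcol : ∀ t, C t k = if t = l then C l k else 0 := fun t => by
    split_ifs with ht
    · rw [ht]
    · exact hsingle t ht
  have hc' : -C l k = 1 ∨ -C l k = -1 := by omega
  have hεP : epsCol (Emat B l (epsCol Cd l) * C) k = -C l k :=
    epsCol_eq_of_col (k := l) hc' fun t => by
      rw [Emat_mul_apply_of_col _ hB hsingle, hcol]
      split_ifs <;> simp
  have hεQ : epsCol (Emat B' k (C l k) * Cd) l = -C l k :=
    epsCol_eq_of_col (k := k) hc' fun i => by
      rw [Emat_mul_apply_of_col _ hB' (fun i hi => by rw [hcol', if_neg hi]), hcol']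
      split_ifs <;> simp
  rw [hεP, epsCol_eq_of_col hc hcol, hεQ, epsCol_eq_of_col hc hcol', ← mul_assoc]
  exact Emat_mul_mul_Emat_sign_swap (by rcases hc with h | h <;> rw [h] <;> rfl) hB hB' hcol hrow

end InitialSeedSigns

lemma GlobalSC.signCoherent (hGSC : GlobalSC n) {B : Matrix (Fin n) (Fin n) ℤ} {d : Fin n → ℤ}
    (hd : SkewSymmBy B d) : ∀ w, SignCoherent (Cmat B w) :=
  hGSC B ⟨d, hd⟩

section SecondDuality

variable (hGSC : GlobalSC n) {B : Matrix (Fin n) (Fin n) ℤ} {d : Fin n → ℤ}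
  (hd : SkewSymmBy B d)
include hGSC hd

/-- If the `k`-th c-vector after mutating `B` at `l` and following `v` is `±e_l`, the first
duality along `v` and along its reverse forces `d k = d l`; then row `k` of
`D B_v = C_vᵀ D μ_l(B) C_v` gives the claim. -/
lemma mul_Cmat_apply_eq_of_col_single (l k : Fin n) (v : List (Fin n))
    (hdual : Cmat (-Bmat (mutB B l) v) v.reverse * Cmat (mutB B l) v = 1)
    (hsingle : ∀ t, t ≠ l → Cmat (mutB B l) v t k = 0) (j : Fin n) :
    Cmat (mutB B l) v l k * (B * Cmat (mutB B l) v) l j = -Bmat (mutB B l) v k j := by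
  have hd₁ := hd.mutB l
  have hd' := (hd₁.Bmat v).neg
  have hcol' := (col_eq_single_of_mul_eq_one hdual hsingle).2
  have hdkl : d k = d l := Int.dvd_antisymm (hd.1 k).le (hd.1 l).le
    (dvd_of_transpose_mul_diagonal_mul
      (transpose_Cmat_mul_diagonal_mul_Gmat hd' (hGSC.signCoherent hd') v.reverse)
      fun i hi => by rw [hcol', if_neg hi])
    (dvd_of_transpose_mul_diagonal_mul
      (transpose_Cmat_mul_diagonal_mul_Gmat hd₁ (hGSC.signCoherent hd₁) v) hsingle)
  have h := congrFun (congrFun (diagonal_mul_Bmat hd₁ (hGSC.signCoherent hd₁) v) k) j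
  simp only [Matrix.mul_assoc] at h
  rw [Matrix.diagonal_mul, Matrix.mul_apply,
    Finset.sum_eq_single l (fun t _ ht => by simp [hsingle t ht]) (by simp),
    Matrix.transpose_apply, Matrix.diagonal_mul, mutB_mul_apply_left, hdkl] at h
  apply mul_left_cancel₀ (hd.1 l).ne'
  linear_combination h

lemma Cmat_cons_append_eq (l k : Fin n) (v : List (Fin n))
    (hdual : Cmat (-Bmat (mutB B l) v) v.reverse * Cmat (mutB B l) v = 1)
    (hdual' : Cmat (-Bmat (mutB B l) (v ++ [k])) (v ++ [k]).reverse
      * Cmat (mutB B l) (v ++ [k]) = 1)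
    (ih : Cmat B (l :: v) =
      Emat B l (epsCol (Cmat (-Bmat (mutB B l) v) v.reverse) l) * Cmat (mutB B l) v) :
    Cmat B (l :: (v ++ [k])) =
      Emat B l (epsCol (Cmat (-Bmat (mutB B l) (v ++ [k])) (v ++ [k]).reverse) l)
        * Cmat (mutB B l) (v ++ [k]) := by
  have hd₁ := hd.mutB l
  have hB'k : Bmat (mutB B l) v k k = 0 := (hd₁.Bmat v).apply_self k
  set B' := Bmat (mutB B l) v
  set C := Cmat (mutB B l) v
  set Cdual := Cmat (-B') v.reverse
  set E' := Emat B' k (epsCol C k)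
  have hCk : Cmat (mutB B l) (v ++ [k]) = C * E' :=
    Cmat_append_eq_mul_Emat hd₁ (hGSC.signCoherent hd₁) v k
  have hPk : Cmat B (l :: (v ++ [k])) =
      Cmat B (l :: v) * Emat B' k (epsCol (Cmat B (l :: v)) k) := by
    rw [← List.cons_append, Cmat_append_eq_mul_Emat hd (hGSC.signCoherent hd), Bmat_cons]
  have hdualk : Cmat (-Bmat (mutB B l) (v ++ [k])) (v ++ [k]).reverse = E' * Cdual := by
    refine left_inv_eq_right_inv (hCk ▸ hdual') ?_
    rw [show C * E' * (E' * Cdual) = C * (E' * E') * Cdual by simp only [mul_assoc],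
      Emat_mul_self _ hB'k, mul_one, mul_eq_one_comm.mp hdual]
  have hPsc : SignCoherent (Emat B l (epsCol Cdual l) * C) := ih ▸ hGSC.signCoherent hd (l :: v)
  have hdualsc : SignCoherent (E' * Cdual) := hdualk ▸ hGSC.signCoherent (hd₁.Bmat _).neg _
  rw [hPk, hCk, hdualk, ih]
  by_cases hsingle : ∀ t, t ≠ l → C t k = 0
  · exact Emat_mul_mul_Emat_of_col_single (hd.apply_self l) hB'k hdual hsingle
      (mul_Cmat_apply_eq_of_col_single hGSC hd l k v hdual hsingle)
  · push Not at hsingle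
    obtain ⟨t, htl, htk⟩ := hsingle
    obtain ⟨hεP, hεQ⟩ := epsCol_Emat_mul_of_apply_ne hdual (hGSC.signCoherent hd₁ v)
      (hGSC.signCoherent (hd₁.Bmat v).neg v.reverse) hPsc hdualsc htl htk
    rw [hεP, hεQ, mul_assoc]

/-- Mutation of the initial seed, proved jointly with the second duality. -/
lemma Cmat_cons_eq_Emat_mul {N : ℕ}
    (hdual : ∀ w : List (Fin n), w.length ≤ N → ∀ (B : Matrix (Fin n) (Fin n) ℤ)
      (d : Fin n → ℤ), SkewSymmBy B d → Cmat (-Bmat B w) w.reverse * Cmat B w = 1)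
    (l : Fin n) (v : List (Fin n)) (hv : v.length ≤ N) :
    Cmat B (l :: v) =
      Emat B l (epsCol (Cmat (-Bmat (mutB B l) v) v.reverse) l) * Cmat (mutB B l) v := by
  induction v using List.reverseRecOn with
  | nil =>
    rw [← List.nil_append [l], Cmat_append_eq_mul_Emat hd (hGSC.signCoherent hd)]
    simp [Cmat, Bmat, BCG, epsCol_one]
  | append_singleton v k ih =>
    have hd₁ := hd.mutB l
    rw [List.length_append, List.length_singleton] at hv
    exact Cmat_cons_append_eq hGSC hd l k v (hdual v (by omega) _ d hd₁)
      (hdual (v ++ [k]) (by simpa using hv) _ d hd₁) (ih (by omega))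

theorem Cmat_reverse_mul_Cmat (w : List (Fin n)) :
    Cmat (-Bmat B w) w.reverse * Cmat B w = 1 := by
  suffices h : ∀ N, ∀ w : List (Fin n), w.length ≤ N → ∀ (B : Matrix (Fin n) (Fin n) ℤ)
      (d : Fin n → ℤ), SkewSymmBy B d → Cmat (-Bmat B w) w.reverse * Cmat B w = 1 from
    h _ w le_rfl B d hd
  intro N
  induction N with
  | zero =>
    rintro (_ | ⟨l, u⟩) hw B d hd
    · exact one_mul 1
    · simp at hw
  | succ N ihN =>
    rintro (_ | ⟨l, u⟩) hw B d hd
    · exact one_mul 1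
    have hu : u.length ≤ N := by simpa using hw
    have hd₁ := hd.mutB l
    have hd' := (hd₁.Bmat u).neg
    have hrow : ∀ j, (-mutB B l) l j = B l j := fun j => by
      rw [Matrix.neg_apply, mutB_apply_left, neg_neg]
    rw [Bmat_cons, List.reverse_cons, Cmat_append_eq_mul_Emat hd' (hGSC.signCoherent hd'),
      Bmat_neg, Bmat_Bmat_reverse, Emat_congr_row _ hrow, Cmat_cons_eq_Emat_mul hGSC hd ihN l u hu,
      ← mul_assoc, mul_assoc (Cmat _ _), Emat_mul_self _ (hd.apply_self l), mul_one]
    exact ihN u hu _ d hd₁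


lemma diagonal_mul_Gmat (w : List (Fin n)) :
    diagonal d * Gmat B w = (Cmat (-Bmat B w) w.reverse)ᵀ * diagonal d := by
  have hinv : Cmat B w * Cmat (-Bmat B w) w.reverse = 1 :=
    mul_eq_one_comm.mp (Cmat_reverse_mul_Cmat hGSC hd w)
  calc diagonal d * Gmat B w
      = ((Cmat (-Bmat B w) w.reverse)ᵀ * (Cmat B w)ᵀ) * (diagonal d * Gmat B w) := by
        rw [← Matrix.transpose_mul, hinv, Matrix.transpose_one, one_mul]
    _ = (Cmat (-Bmat B w) w.reverse)ᵀ * ((Cmat B w)ᵀ * diagonal d * Gmat B w) := by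
        simp only [mul_assoc]
    _ = (Cmat (-Bmat B w) w.reverse)ᵀ * diagonal d := by
        rw [transpose_Cmat_mul_diagonal_mul_Gmat hd (hGSC.signCoherent hd)]

end SecondDuality

/-- sign-coherence of g-vectors: under the global sign-coherence hypothesis,
for each `i` the entries of row `i` of `G^B(w)` are all nonnegative or all nonpositive. -/
theorem Gmat_rows_signCoherent {n : ℕ} (hGSC : GlobalSC n) (B : Matrix (Fin n) (Fin n) ℤ)
    (hB : SkewSymmetrizable B) (w : List (Fin n)) :
    ∀ i, (∀ j, 0 ≤ Gmat B w i j) ∨ (∀ j, Gmat B w i j ≤ 0) := by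
  obtain ⟨d, hd⟩ := hB
  exact rows_signCoherent_of_diagonal_mul_eq hd.1 (diagonal_mul_Gmat hGSC hd w)
    (hGSC.signCoherent (hd.Bmat w).neg w.reverse)
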